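/- arXiv:1606.00277 — 7 statements merged into one kernel-verified Lean document; each statement's English description precedes it below -/
import Mathlib

section
/- Let w be a binary word of length ℓ and let m ≥ 0 be an integer. Then the number of binary words obtainable from w by m internal insertions is |I'(w,m)| = C(3m+ℓ, m) − C(3m+ℓ, <m). (No reducedness assumption on w is needed.) -/
/-- An internal insertion: insert a triple `bbb` at some location of the word. -/
def InternalIns (u v : List Bool) : Prop :=
  ∃ j ≤ u.length, ∃ b : Bool, v = u.take j ++ [b, b, b] ++ u.drop j

/-- `I' w m` is the set of words obtainable from `w` by `m` internal insertions. -/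
def internalInsertionSet (w : List Bool) : ℕ → Set (List Bool)
  | 0 => {w}
  | m + 1 => {v | ∃ u ∈ internalInsertionSet w m, InternalIns u v}

namespace II

local notation "I" => internalInsertionSet

lemma mem_zero {w v : List Bool} : v ∈ I w 0 ↔ v = w := Iff.rfl

lemma mem_succ {w v : List Bool} {m : ℕ} :
    v ∈ I w (m+1) ↔ ∃ u ∈ I w m, InternalIns u v := Iff.rfl

/-- prepend a letter -/
lemma prepend {w v : List Bool} {m : ℕ} (c : Bool) (h : v ∈ I w m) :
    (c :: v) ∈ I (c :: w) m := by
  induction m generalizing v with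
  | zero => rw [mem_zero] at h ⊢; rw [h]
  | succ m ih =>
    obtain ⟨u, hu, j, hj, b, rfl⟩ := h
    exact ⟨c :: u, ih hu, j + 1, by simpa using hj, b, by simp⟩

lemma compose {w u v : List Bool} {k j : ℕ} (h1 : u ∈ I w k) (h2 : v ∈ I u j) :
    v ∈ I w (k + j) := by
  induction j generalizing v with
  | zero => rw [mem_zero] at h2; rwa [h2]
  | succ j ih =>
    obtain ⟨x, hx, hins⟩ := h2
    exact ⟨x, ih hx, hins⟩

lemma insert_mem {u : List Bool} {j : ℕ} (hj : j ≤ u.length) (b : Bool) :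
    (u.take j ++ [b, b, b] ++ u.drop j) ∈ I u 1 :=
  ⟨u, rfl, j, hj, b, rfl⟩

lemma length_mem {w v : List Bool} {m : ℕ} (h : v ∈ I w m) :
    v.length = w.length + 3 * m := by
  induction m generalizing v with
  | zero => rw [mem_zero] at h; simp [h]
  | succ m ih =>
    obtain ⟨u, hu, j, hj, b, rfl⟩ := h
    simp [ih hu]; omega

lemma finite (w : List Bool) (m : ℕ) : (I w m).Finite :=
  (List.finite_length_eq Bool (w.length + 3 * m)).subset fun _ h => length_mem h

end II

namespace II
local notation "I" => internalInsertionSet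

lemma one_ins_front (b : Bool) (w : List Bool) : (b::b::b::w) ∈ I w 1 :=
  ⟨w, rfl, 0, Nat.zero_le _, b, rfl⟩

lemma one_ins_two (b c : Bool) (w : List Bool) :
    (b::b::c::c::c::w) ∈ I (b::b::w) 1 :=
  ⟨b::b::w, rfl, 2, by simp, c, rfl⟩

lemma two_ins (a c : Bool) (w : List Bool) :
    (a::a::c::c::c::a::w) ∈ I w 2 :=
  compose (one_ins_front a w) (one_ins_two a c (a :: w))

/-- The hard direction of the structural decomposition. -/
lemma struct_sub {m : ℕ} : ∀ {w v : List Bool}, v ∈ I w (m+1) →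
    ∃ c v', v = c :: v' ∧
      ((∃ w', w = c :: w' ∧ v' ∈ I w' (m+1)) ∨
        ((w = [] ∨ ∃ a w', w = a :: w' ∧ c = !a) ∧ v' ∈ I (c :: c :: w) m)) := by
  induction m with
  | zero =>
    rintro w v ⟨u, hu, j, hj, b, rfl⟩
    rw [mem_zero] at hu; subst hu
    cases u with
    | nil =>
      obtain rfl : j = 0 := Nat.le_zero.mp hj
      exact ⟨b, [b, b], by simp, Or.inr ⟨Or.inl rfl, mem_zero.2 rfl⟩⟩
    | cons a w₂ =>
      cases j with
      | zero =>
        by_cases hb : b = a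
        · subst hb
          exact ⟨b, b::b::b::w₂, by simp, Or.inl ⟨w₂, rfl, one_ins_front b w₂⟩⟩
        · exact ⟨b, b::b::a::w₂, by simp,
            Or.inr ⟨Or.inr ⟨a, w₂, rfl, by revert hb; cases a <;> cases b <;> simp⟩,
            mem_zero.2 rfl⟩⟩
      | succ j' =>
        refine ⟨a, w₂.take j' ++ [b,b,b] ++ w₂.drop j', by simp, Or.inl ⟨w₂, rfl, ?_⟩⟩
        exact insert_mem (by simpa using hj) b
  | succ m ih =>
    rintro w v ⟨u, hu, j, hj, b, rfl⟩
    obtain ⟨c, u', rfl, hcase⟩ := ih hu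
    cases j with
    | zero =>
      refine ⟨b, b::b::c::u', by simp, ?_⟩
      rcases hcase with ⟨w₂, rfl, hu'⟩ | ⟨hside, hu'⟩
      · -- u matched the head of w = c :: w₂
        by_cases hb : b = c
        · subst hb
          exact Or.inl ⟨w₂, rfl, compose hu' (one_ins_front b u')⟩
        · refine Or.inr ⟨Or.inr ⟨c, w₂, rfl, by revert hb; cases b <;> cases c <;> simp⟩, ?_⟩
          exact prepend b (prepend b (prepend c hu'))
      · -- u was in the non-matching branch: u' ∈ I (c::c::w) m
        rcases hside with rfl | ⟨a, w₂, rfl, rfl⟩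
        · -- w = []
          refine Or.inr ⟨Or.inl rfl, ?_⟩
          have h1 : (b::b::c::u') ∈ I (b::b::c::c::c::[]) m :=
            prepend b (prepend b (prepend c hu'))
          simpa [Nat.add_comm] using compose (one_ins_two b c []) h1
        · -- w = a :: w₂, c = !a
          by_cases hb : b = a
          · subst hb
            refine Or.inl ⟨w₂, rfl, ?_⟩
            have h1 : (b::b::(!b)::u') ∈ I (b::b::(!b)::(!b)::(!b)::b::w₂) m :=
              prepend b (prepend b (prepend (!b) hu'))
            have h2 := compose (two_ins b (!b) w₂) h1
            rwa [show 2 + m = m + 1 + 1 by omega] at h2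
          · refine Or.inr ⟨Or.inr ⟨a, w₂, rfl, by revert hb; cases a <;> cases b <;> simp⟩, ?_⟩
            have h1 : (b::b::(!a)::u') ∈ I (b::b::(!a)::(!a)::(!a)::a::w₂) m :=
              prepend b (prepend b (prepend (!a) hu'))
            simpa [Nat.add_comm] using compose (one_ins_two b (!a) (a::w₂)) h1
    | succ j' =>
      refine ⟨c, u'.take j' ++ [b,b,b] ++ u'.drop j', by simp, ?_⟩
      have hins : (u'.take j' ++ [b,b,b] ++ u'.drop j') ∈ I u' 1 :=
        insert_mem (by simpa using hj) b
      rcases hcase with ⟨w₂, rfl, hu'⟩ | ⟨hside, hu'⟩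
      · exact Or.inl ⟨w₂, rfl, compose hu' hins⟩
      · exact Or.inr ⟨hside, compose hu' hins⟩

end II

namespace II
local notation "I" => internalInsertionSet

lemma struct_cons (a : Bool) (w' : List Bool) (m : ℕ) :
    I (a :: w') (m+1) =
      (fun v => a :: v) '' I w' (m+1) ∪
      (fun v => (!a) :: v) '' I ((!a) :: (!a) :: a :: w') m := by
  ext v
  constructor
  · intro hv
    obtain ⟨c, v', rfl, hcase⟩ := struct_sub hv
    rcases hcase with ⟨w₂, heq, hv'⟩ | ⟨hside, hv'⟩
    · obtain ⟨rfl, rfl⟩ : a = c ∧ w' = w₂ := by simpa using heq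
      exact Or.inl ⟨v', hv', rfl⟩
    · rcases hside with heq | ⟨a₀, w₀, heq, rfl⟩
      · exact absurd heq (by simp)
      · obtain ⟨rfl, rfl⟩ : a₀ = a ∧ w₀ = w' := by simpa using heq.symm
        exact Or.inr ⟨v', hv', rfl⟩
  · rintro (⟨v', hv', rfl⟩ | ⟨v', hv', rfl⟩)
    · exact prepend a hv'
    · have h1 : ((!a) :: v') ∈ I ((!a) :: (!a) :: (!a) :: a :: w') m := prepend (!a) hv'
      have h2 := compose (one_ins_front (!a) (a :: w')) h1
      rwa [show 1 + m = m + 1 by omega] at h2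

lemma struct_nil (m : ℕ) :
    I ([] : List Bool) (m+1) =
      (fun v => false :: v) '' I [false, false] m ∪
      (fun v => true :: v) '' I [true, true] m := by
  ext v
  constructor
  · intro hv
    obtain ⟨c, v', rfl, hcase⟩ := struct_sub hv
    rcases hcase with ⟨w₂, heq, hv'⟩ | ⟨hside, hv'⟩
    · exact absurd heq (by simp)
    · cases c
      · exact Or.inl ⟨v', hv', rfl⟩
      · exact Or.inr ⟨v', hv', rfl⟩
  · rintro (⟨v', hv', rfl⟩ | ⟨v', hv', rfl⟩)
    · have h2 := compose (one_ins_front false ([] : List Bool)) (prepend false hv')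
      rwa [show 1 + m = m + 1 by omega] at h2
    · have h2 := compose (one_ins_front true ([] : List Bool)) (prepend true hv')
      rwa [show 1 + m = m + 1 by omega] at h2

lemma disj_images (a : Bool) (S T : Set (List Bool)) :
    Disjoint ((fun v => a :: v) '' S) ((fun v => (!a) :: v) '' T) := by
  rw [Set.disjoint_left]
  rintro x ⟨y, _, rfl⟩ ⟨z, _, h⟩
  simp at h

lemma ncard_cons (a : Bool) (w' : List Bool) (m : ℕ) :
    (I (a :: w') (m+1)).ncard =
      (I w' (m+1)).ncard + (I ((!a) :: (!a) :: a :: w') m).ncard := by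
  rw [struct_cons, Set.ncard_union_eq (disj_images a _ _)
      ((finite _ _).image _) ((finite _ _).image _),
    Set.ncard_image_of_injective _ List.cons_injective,
    Set.ncard_image_of_injective _ List.cons_injective]

lemma ncard_nil (m : ℕ) :
    (I ([] : List Bool) (m+1)).ncard =
      (I [false, false] m).ncard + (I [true, true] m).ncard := by
  rw [struct_nil, Set.ncard_union_eq (by simpa using disj_images false _ _)
      ((finite _ _).image _) ((finite _ _).image _),
    Set.ncard_image_of_injective _ List.cons_injective,
    Set.ncard_image_of_injective _ List.cons_injective]

end II

namespace II
local notation "I" => internalInsertionSet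

/-- The counting function. -/
def F (ℓ m : ℕ) : ℤ :=
  (Nat.choose (3 * m + ℓ) m : ℤ) - ∑ k ∈ Finset.range m, (Nat.choose (3 * m + ℓ) k : ℤ)

lemma sum_choose_succ (n m : ℕ) :
    ∑ k ∈ Finset.range (m+1), (n+1).choose k
      = ∑ k ∈ Finset.range (m+1), n.choose k + ∑ k ∈ Finset.range m, n.choose k := by
  rw [Finset.sum_range_succ' (fun k => (n+1).choose k),
    Finset.sum_range_succ' (fun k => n.choose k)]
  simp [Nat.choose_succ_succ, Finset.sum_add_distrib]
  omega

lemma choose_key (m : ℕ) : (3*m+2).choose (m+1) = 2 * (3*m+2).choose m := by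
  have h := Nat.choose_succ_right_eq (3*m+2) m
  rw [show 3*m+2 - m = 2*(m+1) by omega] at h
  apply Nat.eq_of_mul_eq_mul_right (Nat.succ_pos m)
  rw [h, Nat.succ_eq_add_one]; ring

lemma cast_sum_choose (n m : ℕ) :
    ((∑ k ∈ Finset.range m, n.choose k : ℕ) : ℤ)
      = ∑ k ∈ Finset.range m, (n.choose k : ℤ) := by
  push_cast; rfl

lemma F_succ (ℓ m : ℕ) : F (ℓ+1) (m+1) = F ℓ (m+1) + F (ℓ+3) m := by
  simp only [F]
  have e1 : 3*(m+1)+(ℓ+1) = (3*(m+1)+ℓ)+1 := by ring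
  have e2 : 3*m+(ℓ+3) = 3*(m+1)+ℓ := by ring
  rw [e1, e2]
  set n := 3*(m+1)+ℓ with hn
  have hc : (((n+1).choose (m+1) : ℕ) : ℤ) = (n.choose m : ℤ) + (n.choose (m+1) : ℤ) := by
    exact_mod_cast congrArg (Nat.cast : ℕ → ℤ) (Nat.choose_succ_succ n m)
  have hs : (∑ k ∈ Finset.range (m+1), ((n+1).choose k : ℤ))
      = ∑ k ∈ Finset.range (m+1), (n.choose k : ℤ) + ∑ k ∈ Finset.range m, (n.choose k : ℤ) := by
    rw [← cast_sum_choose, ← cast_sum_choose, ← cast_sum_choose, ← Nat.cast_add]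
    exact_mod_cast sum_choose_succ n m
  rw [hc, hs]; ring

lemma F_nil (m : ℕ) : F 0 (m+1) = 2 * F 2 m := by
  simp only [F]
  have e1 : 3*(m+1)+0 = (3*m+2)+1 := by ring
  have e2 : 3*m+2 = 3*m+2 := rfl
  rw [e1]
  set n := 3*m+2 with hn
  have hc : (((n+1).choose (m+1) : ℕ) : ℤ) = (n.choose m : ℤ) + (n.choose (m+1) : ℤ) := by
    exact_mod_cast congrArg (Nat.cast : ℕ → ℤ) (Nat.choose_succ_succ n m)
  have hs : (∑ k ∈ Finset.range (m+1), ((n+1).choose k : ℤ))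
      = ∑ k ∈ Finset.range (m+1), (n.choose k : ℤ) + ∑ k ∈ Finset.range m, (n.choose k : ℤ) := by
    rw [← cast_sum_choose, ← cast_sum_choose, ← cast_sum_choose, ← Nat.cast_add]
    exact_mod_cast sum_choose_succ n m
  have hkey : ((n.choose (m+1) : ℕ) : ℤ) = 2 * (n.choose m : ℤ) := by
    exact_mod_cast congrArg (Nat.cast : ℕ → ℤ) (choose_key m)
  rw [hc, hs, Finset.sum_range_succ, hkey]; ring

lemma main (m : ℕ) : ∀ w : List Bool, (((I w m).ncard : ℕ) : ℤ) = F w.length m := by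
  induction m with
  | zero =>
    intro w
    simp [internalInsertionSet, F]
  | succ m ih =>
    intro w
    induction w with
    | nil =>
      rw [ncard_nil]
      push_cast
      rw [ih, ih]
      norm_num
      rw [F_nil m]; ring
    | cons a w' ihw =>
      rw [ncard_cons]
      push_cast
      rw [ihw, ih]
      simp only [List.length_cons]
      rw [F_succ w'.length m]

end II

/-- The number of words obtained from a word `w` of length `ℓ` by `m` internal
insertions is `C(3m+ℓ, m) − C(3m+ℓ, <m)`. -/
theorem count_internal_insertions (w : List Bool) (ℓ m : ℕ) (hw : w.length = ℓ) :
    ((internalInsertionSet w m).ncard : ℤ) =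
      (Nat.choose (3 * m + ℓ) m : ℤ) -
        ∑ k ∈ Finset.range m, (Nat.choose (3 * m + ℓ) k : ℤ) := by
  subst hw
  exact II.main m w
end

section
/- Let w be a binary word of length ℓ, let m ≥ 0, and let w' ∈ I'(w,m). Then there is exactly one sequence of pairs ((j_1,b_1), …, (j_m,b_m)), with each b_t ∈ {0,1}, such that: applying the insertions in order to w (at step t the triple b_t b_t b_t is inserted at location j_t of the current word) produces w'; the locations are strictly increasing, j_1 < j_2 < … < j_m; and for each step t, either the insertion takes place at the end of the current word (j_t equals the current length plus 1) or the letter of the current word at position j_t differs from b_t (that is, 000 is inserted only before a 1 or at the end, and 111 only before a 0 or at the end). -/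
/-- Insert the triple `b b b` at (1-indexed) location `j` of `w`, i.e. between the
first `j-1` letters and the rest. -/
def applyIns (w : List Bool) (p : ℕ × Bool) : List Bool :=
  w.take (p.1 - 1) ++ [p.2, p.2, p.2] ++ w.drop (p.1 - 1)

/-- Apply a sequence of insertions, in order. -/
def applySeq (w : List Bool) (s : List (ℕ × Bool)) : List Bool :=
  s.foldl applyIns w

/-- A sequence of insertions is canonical: the locations are valid and strictly
increasing, and each triple `bbb` is inserted either at the end of the current
word or before a letter different from `b` (so `000` only before a `1` or at the
end, and `111` only before a `0` or at the end). -/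
def CanonicalSeq : List Bool → List (ℕ × Bool) → Prop
  | _, [] => True
  | w, (j, b) :: rest =>
      1 ≤ j ∧ j ≤ w.length + 1 ∧
      (j = w.length + 1 ∨ w.getD (j - 1) false ≠ b) ∧
      (∀ q ∈ rest, j < q.1) ∧
      CanonicalSeq (applyIns w (j, b)) rest

namespace CanonAux

lemma applyIns_def (w : List Bool) (j : ℕ) (b : Bool) :
    applyIns w (j, b) = w.take (j-1) ++ [b,b,b] ++ w.drop (j-1) := rfl

lemma take_applyIns_low (w : List Bool) (j k : ℕ) (b : Bool)
    (h1 : k ≤ j - 1) (h2 : k ≤ w.length) :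
    (applyIns w (j,b)).take k = w.take k := by
  rw [applyIns_def, List.take_append, List.take_append]
  simp only [List.length_append, List.length_take, List.length_cons, List.length_nil]
  have e1 : k - ((j - 1) ⊓ w.length) = 0 := by omega
  have e2 : k - ((j - 1) ⊓ w.length + (0 + 1 + 1 + 1)) = 0 := by omega
  rw [e1, e2, List.take_take]
  have e3 : min k (j-1) = k := by omega
  simp [e3]

lemma take_applyIns_self (w : List Bool) (j : ℕ) (b : Bool)
    (h1 : 1 ≤ j) (h2 : j ≤ w.length + 1) :
    (applyIns w (j,b)).take j = w.take (j-1) ++ [b] := by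
  rw [applyIns_def, List.take_append, List.take_append]
  simp only [List.length_append, List.length_take, List.length_cons, List.length_nil]
  have e1 : (j - 1) ⊓ w.length = j - 1 := by omega
  rw [e1]
  have e2 : j - (j-1) = 1 := by omega
  have e3 : j - (j - 1 + (0 + 1 + 1 + 1)) = 0 := by omega
  rw [e2, e3]
  have e4 : (w.take (j-1)).take j = w.take (j-1) := by
    apply List.take_of_length_le; simp only [List.length_take]; omega
  simp [e4]

lemma getD_applyIns_low (w : List Bool) (j i : ℕ) (b : Bool)
    (h1 : i < j - 1) (h2 : i < w.length) :
    (applyIns w (j,b)).getD i false = w.getD i false := by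
  rw [applyIns_def, List.getD_eq_getElem?_getD, List.getD_eq_getElem?_getD,
    List.append_assoc, List.getElem?_append_left (by simp; omega), List.getElem?_take]
  simp [h1]

lemma getD_applyIns_high (w : List Bool) (j i : ℕ) (b : Bool)
    (h1 : j - 1 ≤ i) (h2 : j ≤ w.length + 1) :
    (applyIns w (j,b)).getD (i + 3) false = w.getD i false := by
  rw [applyIns_def, List.getD_eq_getElem?_getD, List.getD_eq_getElem?_getD,
    List.append_assoc, List.getElem?_append_right (by simp; omega)]
  simp only [List.length_take]
  rw [List.getElem?_append_right (by simp; omega)]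
  simp only [List.length_cons, List.length_nil, List.getElem?_drop]
  congr 2
  omega


def lead (b : Bool) : List Bool → ℕ
  | [] => 0
  | a :: l => if a = b then lead b l + 1 else 0

lemma lead_le (b : Bool) (l : List Bool) : lead b l ≤ l.length := by
  induction l with
  | nil => simp [lead]
  | cons a l ih => by_cases h : a = b <;> simp [lead, h] <;> omega

lemma lead_take (b : Bool) (l : List Bool) :
    l.take (lead b l) = List.replicate (lead b l) b := by
  induction l with
  | nil => simp [lead]
  | cons a l ih =>
    by_cases h : a = b
    · simp [lead, h, List.replicate_succ, ih]
    · simp [lead, h]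

lemma lead_end (b : Bool) (l : List Bool) :
    lead b l = l.length ∨ l.getD (lead b l) false ≠ b := by
  induction l with
  | nil => left; simp [lead]
  | cons a l ih =>
    by_cases h : a = b
    · rcases ih with ih | ih
      · left; simp [lead, h, ih]
      · right; simpa [lead, h] using ih
    · right; simpa [lead, h] using h

lemma lead_pos (b : Bool) (l : List Bool) (h : l.getD 0 false = b) (hne : l ≠ []) :
    1 ≤ lead b l := by
  cases l with
  | nil => simp at hne
  | cons a l => simp at h; simp [lead, h]

lemma triple_comm_replicate (b : Bool) (n : ℕ) :
    [b,b,b] ++ List.replicate n b = List.replicate n b ++ [b,b,b] := by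
  have h3 : [b,b,b] = List.replicate 3 b := rfl
  rw [h3, ← List.replicate_add, ← List.replicate_add, Nat.add_comm]

lemma slide_core (b : Bool) (l : List Bool) :
    [b,b,b] ++ l = l.take (lead b l) ++ ([b,b,b] ++ l.drop (lead b l)) := by
  conv_lhs => rw [← List.take_append_drop (lead b l) l]
  rw [lead_take, ← List.append_assoc, ← List.append_assoc, triple_comm_replicate]

/-- Slide lemma. -/
lemma slide (w : List Bool) (p : ℕ) (b : Bool) (hp : p ≤ w.length) :
    ∃ k, p ≤ k ∧ k ≤ w.length ∧ (k = w.length ∨ w.getD k false ≠ b) ∧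
      w.take p ++ [b,b,b] ++ w.drop p = w.take k ++ [b,b,b] ++ w.drop k ∧
      (p < w.length → w.getD p false = b → p < k) := by
  refine ⟨p + lead b (w.drop p), by omega, ?_, ?_, ?_, ?_⟩
  · have := lead_le b (w.drop p)
    simp only [List.length_drop] at this
    omega
  · rcases lead_end b (w.drop p) with h | h
    · left; simp only [List.length_drop] at h; omega
    · right
      have e : w.getD (p + lead b (w.drop p)) false = (w.drop p).getD (lead b (w.drop p)) false := by
        rw [List.getD_eq_getElem?_getD, List.getD_eq_getElem?_getD, List.getElem?_drop]
      rw [e]; exact h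
  · rw [List.append_assoc, slide_core b (w.drop p), ← List.append_assoc, ← List.append_assoc,
      ← List.take_add, List.drop_drop]
  · intro hlt hgd
    have hl0 : (w.drop p).getD 0 false = b := by
      rw [List.getD_eq_getElem?_getD, List.getElem?_drop]
      rw [List.getD_eq_getElem?_getD] at hgd
      simpa using hgd
    have hlne : w.drop p ≠ [] := by
      intro hcon
      have := congrArg List.length hcon
      simp at this; omega
    have := lead_pos b (w.drop p) hl0 hlne
    omega


lemma commute (w : List Bool) (j j₂ : ℕ) (b b₂ : Bool)
    (h1 : 1 ≤ j₂) (h2 : j₂ ≤ j) (h3 : j ≤ w.length + 1) :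
    applyIns (applyIns w (j,b)) (j₂,b₂) =
      applyIns (applyIns w (j₂,b₂)) (j+3, b) := by
  have hpw : j - 1 ≤ w.length := by omega
  rw [applyIns_def, applyIns_def, applyIns_def (w := w) (j := j₂), applyIns_def]
  have hlj : (w.take (j-1)).length = j - 1 := by simp only [List.length_take]; omega
  have hlj2 : (w.take (j₂-1)).length = j₂ - 1 := by simp only [List.length_take]; omega
  have e1 : (w.take (j-1) ++ [b,b,b] ++ w.drop (j-1)).take (j₂-1) = w.take (j₂-1) := by
    rw [List.take_append, List.take_append]
    simp only [List.length_append, hlj, List.length_cons, List.length_nil]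
    have a1 : j₂ - 1 - (j - 1) = 0 := by omega
    have a2 : j₂ - 1 - (j - 1 + (0 + 1 + 1 + 1)) = 0 := by omega
    rw [a1, a2, List.take_take]
    have a3 : min (j₂-1) (j-1) = j₂ - 1 := by omega
    simp [a3]
  have e2 : (w.take (j-1) ++ [b,b,b] ++ w.drop (j-1)).drop (j₂-1)
      = (w.take (j-1)).drop (j₂-1) ++ [b,b,b] ++ w.drop (j-1) := by
    rw [List.drop_append, List.drop_append]
    simp only [List.length_append, hlj, List.length_cons, List.length_nil]
    have a1 : j₂ - 1 - (j - 1) = 0 := by omega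
    have a2 : j₂ - 1 - (j - 1 + (0 + 1 + 1 + 1)) = 0 := by omega
    rw [a1, a2]
    simp [List.append_assoc]
  rw [e1, e2]
  have e3 : (w.take (j₂-1) ++ [b₂,b₂,b₂] ++ w.drop (j₂-1)).take (j+3-1)
      = w.take (j₂-1) ++ [b₂,b₂,b₂] ++ (w.drop (j₂-1)).take (j - j₂) := by
    rw [List.take_append, List.take_append]
    simp only [List.length_append, hlj2, List.length_cons, List.length_nil]
    have a1 : (w.take (j₂-1)).take (j+3-1) = w.take (j₂-1) := by
      apply List.take_of_length_le; rw [hlj2]; omega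
    have a2 : ([b₂,b₂,b₂] : List Bool).take (j+3-1-(j₂-1)) = [b₂,b₂,b₂] := by
      apply List.take_of_length_le; simp only [List.length_cons, List.length_nil]; omega
    rw [a1, a2]
    have a3 : j+3-1-(j₂-1+(0+1+1+1)) = j - j₂ := by omega
    rw [a3]
  have e4 : (w.take (j₂-1) ++ [b₂,b₂,b₂] ++ w.drop (j₂-1)).drop (j+3-1)
      = (w.drop (j₂-1)).drop (j - j₂) := by
    rw [List.drop_append, List.drop_append]
    simp only [List.length_append, hlj2, List.length_cons, List.length_nil]
    have a1 : (w.take (j₂-1)).drop (j+3-1) = [] := by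
      apply List.drop_eq_nil_of_le; rw [hlj2]; omega
    have a2 : ([b₂,b₂,b₂] : List Bool).drop (j+3-1-(j₂-1)) = [] := by
      apply List.drop_eq_nil_of_le; simp only [List.length_cons, List.length_nil]; omega
    rw [a1, a2]
    have a3 : j+3-1-(j₂-1+(0+1+1+1)) = j - j₂ := by omega
    rw [a3]
    simp
  rw [e3, e4]
  have e5 : (w.take (j-1)).drop (j₂-1) = (w.drop (j₂-1)).take (j - j₂) := by
    rw [List.drop_take]
    congr 1
    omega
  have e6 : (w.drop (j₂-1)).drop (j - j₂) = w.drop (j-1) := by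
    rw [List.drop_drop]
    congr 1
    omega
  rw [e5, e6]
  simp [List.append_assoc]

lemma applySeq_cons (w : List Bool) (p : ℕ × Bool) (s : List (ℕ × Bool)) :
    applySeq w (p :: s) = applySeq (applyIns w p) s := rfl

lemma length_applyIns (w : List Bool) (j : ℕ) (b : Bool) (h : j ≤ w.length + 1) :
    (applyIns w (j,b)).length = w.length + 3 := by
  simp only [applyIns_def, List.length_append, List.length_take, List.length_cons,
    List.length_nil, List.length_drop]
  omega

lemma getD_take_eq (w : List Bool) (j : ℕ) (b : Bool) (hj : j < w.length)
    (h : w.take (j+1) = w.take j ++ [b]) : w.getD j false = b := by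
  rw [List.take_succ] at h
  have h2 := List.append_cancel_left h
  rw [List.getD_eq_getElem?_getD]
  cases h3 : w[j]? with
  | none => rw [h3] at h2; simp at h2
  | some c => rw [h3] at h2; simp at h2; simp [h3, h2]

/-- Lemma P: insertions at positions beyond `k` do not change the first `k` letters. -/
lemma take_applySeq (t : List (ℕ × Bool)) : ∀ (u : List Bool) (k : ℕ),
    CanonicalSeq u t → (∀ q ∈ t, k < q.1) → (applySeq u t).take k = u.take k := by
  induction t with
  | nil => intro u k _ _; rfl
  | cons p t ih =>
    obtain ⟨j, b⟩ := p
    intro u k hc hk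
    obtain ⟨h1, h2, h3, h4, h5⟩ := hc
    have hkj : k < j := hk (j, b) (by simp)
    rw [applySeq_cons, ih _ k h5 (fun q hq => hk q (by simp [hq]))]
    exact take_applyIns_low u j k b (by omega) (by omega)

/-- Lemma Q: if the result agrees with the base on the first `k` letters, all
locations of a canonical sequence exceed `k`. -/
lemma pos_gt_of_take_eq (s : List (ℕ × Bool)) (u : List Bool) (k : ℕ)
    (hc : CanonicalSeq u s) (hk : k ≤ u.length)
    (ht : (applySeq u s).take k = u.take k) : ∀ q ∈ s, k < q.1 := by
  cases s with
  | nil => simp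
  | cons p s' =>
    obtain ⟨j, b⟩ := p
    obtain ⟨h1, h2, h3, h4, h5⟩ := hc
    have hkj : k < j := by
      by_contra hcon
      push_neg at hcon
      have hfj : (applySeq u ((j,b)::s')).take j = u.take (j-1) ++ [b] := by
        rw [applySeq_cons, take_applySeq s' _ j h5 h4]
        exact take_applyIns_self u j b h1 h2
      have hfj2 : (applySeq u ((j,b)::s')).take j = u.take j := by
        have e : (applySeq u ((j,b)::s')).take j = ((applySeq u ((j,b)::s')).take k).take j := by
          rw [List.take_take]; congr 1; omega
        rw [e, ht, List.take_take]; congr 1; omega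
      have hju : j ≤ u.length := le_trans hcon hk
      have e2 : u.take ((j-1)+1) = u.take (j-1) ++ [b] := by
        have hj1 : j - 1 + 1 = j := by omega
        rw [hj1, ← hfj, hfj2]
      have hg : u.getD (j-1) false = b := getD_take_eq u (j-1) b (by omega) e2
      rcases h3 with h3 | h3
      · omega
      · exact h3 hg
    intro q hq
    rcases List.mem_cons.mp hq with hq | hq
    · rw [hq]; simpa using hkj
    · exact lt_trans hkj (h4 q hq)

/-- Lemma N: a single valid canonical step followed by a canonical sequence can be
merged into a single canonical sequence. -/
lemma merge_step : ∀ (n : ℕ) (w : List Bool) (j : ℕ) (b : Bool) (t : List (ℕ × Bool)),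
    t.length + (w.length + 1 - j) ≤ n →
    1 ≤ j → j ≤ w.length + 1 →
    (j = w.length + 1 ∨ w.getD (j - 1) false ≠ b) →
    CanonicalSeq (applyIns w (j,b)) t →
    ∃ s, s.length = t.length + 1 ∧ CanonicalSeq w s ∧
      applySeq w s = applySeq (applyIns w (j,b)) t := by
  intro n
  induction n with
  | zero =>
    intro w j b t hm h1 h2 h3 hc
    have ht : t = [] := by
      cases t with
      | nil => rfl
      | cons p t' => simp at hm
    subst ht
    exact ⟨[(j,b)], rfl, ⟨h1, h2, h3, by simp, trivial⟩, rfl⟩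
  | succ n ih =>
    intro w j b t hm h1 h2 h3 hc
    cases t with
    | nil =>
      exact ⟨[(j,b)], rfl, ⟨h1, h2, h3, by simp, trivial⟩, rfl⟩
    | cons p t₂ =>
      obtain ⟨j₂, b₂⟩ := p
      obtain ⟨g1, g2, g3, g4, g5⟩ := hc
      have hw₁len : (applyIns w (j,b)).length = w.length + 3 := length_applyIns w j b h2
      by_cases hlt : j < j₂
      · refine ⟨(j,b) :: (j₂,b₂) :: t₂, rfl, ⟨h1, h2, h3, ?_, ⟨g1, g2, g3, g4, g5⟩⟩, rfl⟩
        intro q hq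
        rcases List.mem_cons.mp hq with hq | hq
        · rw [hq]; simpa using hlt
        · exact lt_trans hlt (g4 q hq)
      · push_neg at hlt
        have hne : (applyIns w (j,b)).getD (j₂ - 1) false ≠ b₂ := by
          rcases g3 with g3 | g3
          · omega
          · exact g3
        have hvlen : (applyIns w (j₂,b₂)).length = w.length + 3 :=
          length_applyIns w j₂ b₂ (by omega)
        have hcomm : applyIns (applyIns w (j,b)) (j₂,b₂)
            = applyIns (applyIns w (j₂,b₂)) (j+3, b) :=
          commute w j j₂ b b₂ g1 hlt h2
        have hv3 : j + 3 = (applyIns w (j₂,b₂)).length + 1 ∨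
            (applyIns w (j₂,b₂)).getD (j + 3 - 1) false ≠ b := by
          rcases h3 with h3 | h3
          · left; omega
          · right
            have e : j + 3 - 1 = (j - 1) + 3 := by omega
            rw [e, getD_applyIns_high w j₂ (j-1) b₂ (by omega) (by omega)]
            exact h3
        have hct₂ : CanonicalSeq (applyIns (applyIns w (j₂,b₂)) (j+3, b)) t₂ := by
          rw [← hcomm]; exact g5
        obtain ⟨s₂, hs₂len, hs₂c, hs₂app⟩ := ih (applyIns w (j₂,b₂)) (j+3) b t₂
          (by rw [hvlen]; simp only [List.length_cons] at hm; omega)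
          (by omega) (by rw [hvlen]; omega) hv3 hct₂
        have hfinal : applySeq (applyIns w (j₂,b₂)) s₂
            = applySeq (applyIns (applyIns w (j,b)) (j₂,b₂)) t₂ := by
          rw [hs₂app, hcomm]
        have htakefinal : (applySeq (applyIns w (j₂,b₂)) s₂).take j₂
            = (applyIns w (j₂,b₂)).take j₂ := by
          rw [hfinal, take_applySeq t₂ _ j₂ g5 g4]
          have e1 : (applyIns (applyIns w (j,b)) (j₂,b₂)).take j₂
              = (applyIns w (j,b)).take (j₂-1) ++ [b₂] :=
            take_applyIns_self (applyIns w (j,b)) j₂ b₂ g1 (by omega)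
          have e2 : (applyIns w (j₂,b₂)).take j₂ = w.take (j₂-1) ++ [b₂] :=
            take_applyIns_self w j₂ b₂ g1 (by omega)
          have e3 : (applyIns w (j,b)).take (j₂-1) = w.take (j₂-1) :=
            take_applyIns_low w j (j₂-1) b (by omega) (by omega)
          rw [e1, e2, e3]
        by_cases hcd : j₂ = w.length + 1 ∨ w.getD (j₂ - 1) false ≠ b₂
        · -- case (a): prepend (j₂,b₂)
          refine ⟨(j₂,b₂) :: s₂, by simp [hs₂len], ⟨g1, by omega, hcd, ?_, hs₂c⟩, ?_⟩
          · exact pos_gt_of_take_eq s₂ (applyIns w (j₂,b₂)) j₂ hs₂c (by omega) htakefinal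
          · rw [applySeq_cons, hfinal]
            rfl
        · -- case (b): slide
          push_neg at hcd
          obtain ⟨hj₂w, heq⟩ := hcd
          have hj₂le : j₂ ≤ w.length := by omega
          have hjj : j₂ = j := by
            by_contra hcon
            have hlt2 : j₂ < j := by omega
            have e : (applyIns w (j,b)).getD (j₂-1) false = w.getD (j₂-1) false :=
              getD_applyIns_low w j (j₂-1) b (by omega) (by omega)
            rw [e, heq] at hne
            exact hne rfl
          obtain ⟨k, hk1, hk2, hk3, hk4, hk5⟩ := slide w (j₂-1) b₂ (by omega)
          have hkgt : j₂ - 1 < k := hk5 (by omega) heq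
          have hveq : applyIns w (j₂, b₂) = applyIns w (k+1, b₂) := by
            rw [applyIns_def, applyIns_def]
            simpa using hk4
          obtain ⟨s₃, hs₃len, hs₃c, hs₃app⟩ := ih w (k+1) b₂ s₂
            (by simp only [List.length_cons] at hm; omega) (by omega) (by omega)
            (by rcases hk3 with hk3 | hk3
                · left; omega
                · right; simpa using hk3)
            (by rw [← hveq]; exact hs₂c)
          refine ⟨s₃, by simp only [List.length_cons]; omega, hs₃c, ?_⟩
          rw [hs₃app, ← hveq, hfinal]
          rfl

/-- Lemma M: a canonical sequence followed by one extra insertion extends. -/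
lemma extend : ∀ (s : List (ℕ × Bool)) (w w' : List Bool),
    CanonicalSeq w s → InternalIns (applySeq w s) w' →
    ∃ s', s'.length = s.length + 1 ∧ CanonicalSeq w s' ∧ applySeq w s' = w' := by
  intro s
  induction s with
  | nil =>
    intro w w' _ hins
    obtain ⟨p, hp, b, hw'⟩ := hins
    obtain ⟨k, hk1, hk2, hk3, hk4, _⟩ := slide w p b hp
    refine ⟨[(k+1, b)], rfl, ⟨by omega, by omega, ?_, by simp, trivial⟩, ?_⟩
    · rcases hk3 with hk3 | hk3
      · left; omega
      · right; simpa using hk3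
    · show applyIns w (k+1, b) = w'
      rw [applyIns_def]
      simp only [Nat.add_sub_cancel]
      rw [← hk4]
      exact hw'.symm
  | cons p s₁ ih =>
    obtain ⟨j, b⟩ := p
    intro w w' hc hins
    obtain ⟨h1, h2, h3, h4, h5⟩ := hc
    rw [applySeq_cons] at hins
    obtain ⟨t', ht'len, ht'c, ht'app⟩ := ih (applyIns w (j,b)) w' h5 hins
    obtain ⟨s'', hs''len, hs''c, hs''app⟩ := merge_step
      (t'.length + (w.length + 1 - j)) w j b t' le_rfl h1 h2 h3 ht'c
    exact ⟨s'', by simp only [List.length_cons]; omega, hs''c, by rw [hs''app, ht'app]⟩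

/-- Existence. -/
lemma exists_canonical : ∀ (m : ℕ) (w w' : List Bool),
    w' ∈ internalInsertionSet w m →
    ∃ s, s.length = m ∧ CanonicalSeq w s ∧ applySeq w s = w' := by
  intro m
  induction m with
  | zero =>
    intro w w' h
    have e : w' = w := h
    exact ⟨[], rfl, trivial, e.symm⟩
  | succ m ih =>
    intro w w' h
    obtain ⟨u, hu, hins⟩ := h
    obtain ⟨s, hslen, hsc, hsapp⟩ := ih w u hu
    rw [← hsapp] at hins
    obtain ⟨s', hs'len, hs'c, hs'app⟩ := extend s w w' hsc hins
    exact ⟨s', by omega, hs'c, hs'app⟩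

lemma head_determined (w : List Bool) (j : ℕ) (b : Bool) (s' : List (ℕ × Bool))
    (hc : CanonicalSeq w ((j,b) :: s')) :
    (applySeq w ((j,b) :: s')).take j = w.take (j-1) ++ [b] := by
  obtain ⟨h1, h2, h3, h4, h5⟩ := hc
  rw [applySeq_cons, take_applySeq s' _ j h5 h4]
  exact take_applyIns_self w j b h1 h2

/-- Uniqueness. -/
lemma unique_canonical : ∀ (s t : List (ℕ × Bool)) (w : List Bool),
    CanonicalSeq w s → CanonicalSeq w t → s.length = t.length →
    applySeq w s = applySeq w t → s = t := by
  intro s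
  induction s with
  | nil =>
    intro t w _ _ hlen _
    cases t with
    | nil => rfl
    | cons p t' => simp at hlen
  | cons p s' ih =>
    obtain ⟨j, b⟩ := p
    intro t w hcs hct hlen happ
    cases t with
    | nil => simp at hlen
    | cons q t' =>
      obtain ⟨j₂, b₂⟩ := q
      have aux : ∀ (j j₂ : ℕ) (b b₂ : Bool) (s' t' : List (ℕ × Bool)),
          CanonicalSeq w ((j,b) :: s') → CanonicalSeq w ((j₂,b₂) :: t') →
          applySeq w ((j,b)::s') = applySeq w ((j₂,b₂)::t') → ¬ (j < j₂) := by
        intro j j₂ b b₂ s' t' hcs hct happ hlt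
        have hd1 := head_determined w j b s' hcs
        have hd2 := head_determined w j₂ b₂ t' hct
        obtain ⟨a1, a2, a3, a4, a5⟩ := hcs
        obtain ⟨c1, c2, c3, c4, c5⟩ := hct
        have hjw : j ≤ w.length := by omega
        have e1 : (applySeq w ((j,b)::s')).take j = w.take j := by
          rw [happ]
          have e : (applySeq w ((j₂,b₂)::t')).take j
              = ((applySeq w ((j₂,b₂)::t')).take j₂).take j := by
            rw [List.take_take]; congr 1; omega
          rw [e, hd2, List.take_append, List.take_take]
          have hl : (w.take (j₂-1)).length = j₂ - 1 := by
            simp only [List.length_take]; omega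
          rw [hl]
          have a6 : j - (j₂-1) = 0 := by omega
          rw [a6]
          have a7 : min j (j₂-1) = j := by omega
          simp [a7]
        rw [hd1] at e1
        have e2 : w.take ((j-1)+1) = w.take (j-1) ++ [b] := by
          have hj1 : j - 1 + 1 = j := by omega
          rw [hj1, ← e1]
        have hg : w.getD (j-1) false = b := getD_take_eq w (j-1) b (by omega) e2
        rcases a3 with a3 | a3
        · omega
        · exact a3 hg
      have hj : j = j₂ := by
        have u1 := aux j j₂ b b₂ s' t' hcs hct happ
        have u2 := aux j₂ j b₂ b t' s' hct hcs happ.symm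
        omega
      subst hj
      have hd1 := head_determined w j b s' hcs
      have hd2 := head_determined w j b₂ t' hct
      have hb : b = b₂ := by
        rw [happ, hd2] at hd1
        have e := List.append_cancel_left hd1
        simpa using e.symm
      subst hb
      obtain ⟨a1, a2, a3, a4, a5⟩ := hcs
      obtain ⟨c1, c2, c3, c4, c5⟩ := hct
      have e : s' = t' := by
        apply ih t' (applyIns w (j,b)) a5 c5 (by simpa using hlen)
        rw [applySeq_cons] at happ
        rw [applySeq_cons] at happ
        exact happ
      rw [e]

end CanonAux

/-- Every word obtained from `w` by `m` internal insertions arises from a unique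
canonical sequence of `m` insertions. -/
theorem canonical_sequence_unique (w : List Bool) (ℓ m : ℕ) (hw : w.length = ℓ)
    (w' : List Bool) (h : w' ∈ internalInsertionSet w m) :
    ∃! s : List (ℕ × Bool),
      s.length = m ∧ CanonicalSeq w s ∧ applySeq w s = w' := by
  obtain ⟨s, hslen, hsc, hsapp⟩ := CanonAux.exists_canonical m w w' h
  refine ⟨s, ⟨hslen, hsc, hsapp⟩, ?_⟩
  rintro t ⟨htlen, htc, htapp⟩
  exact CanonAux.unique_canonical t s w htc hsc (by omega) (by rw [htapp, hsapp])
end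

section
/- Let w be a binary word of length ℓ and let m ≥ 0. For w' ∈ I'(w,m), let S(w') = ((j_1,b_1), …, (j_m,b_m)) be its unique canonical insertion sequence (locations strictly increasing; 000 inserted only before a 1 or at the end; 111 inserted only before a 0 or at the end), and define Λ(w') ⊆ {1, …, 3m+ℓ} to be the set of all locations j_t in S(w') except those locations at which the triple 000 is inserted at the end of the current word. Then the map Λ is injective: if w', w'' ∈ I'(w,m) satisfy Λ(w') = Λ(w''), then w' = w''. -/
/-- The location set `Λ` of a sequence of insertions starting from `w`: the set of
all locations of the insertions, except those at which a `000` is inserted at the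
end of the current word. -/
def lamSet : List Bool → List (ℕ × Bool) → Finset ℕ
  | _, [] => ∅
  | w, (j, b) :: rest =>
      if b = false ∧ j = w.length + 1 then lamSet (applyIns w (j, b)) rest
      else insert j (lamSet (applyIns w (j, b)) rest)

/-! Proof idea: a canonical insertion sequence is recovered from its location set.
Its locations increase, so its first insertion is either a `000` at the end of the word,
which leaves no trace in the set and is detected by the set having no element up to that
end, or it sits at the least element of the set, where the canonicity condition fixes the
inserted letter. Erasing that location leaves the location set of the rest of the
sequence. -/

namespace CanonicalSeq

theorem lt_of_mem_lamSet {c : ℕ} : ∀ {w : List Bool} {s : List (ℕ × Bool)},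
    CanonicalSeq w s → (∀ q ∈ s, c < q.1) → ∀ x ∈ lamSet w s, c < x
  | _, [], _, _, x, hx => by simp [lamSet] at hx
  | w, (j, b) :: rest, ⟨_, _, _, _, hrest⟩, hlt, x, hx => by
    have htail : x ∈ lamSet (applyIns w (j, b)) rest → c < x :=
      lt_of_mem_lamSet hrest (fun q hq => hlt q (List.mem_cons_of_mem _ hq)) x
    have hj : c < j := hlt (j, b) List.mem_cons_self
    simp only [lamSet] at hx
    split at hx
    · exact htail hx
    · rcases Finset.mem_insert.mp hx with rfl | hx
      · exact hj
      · exact htail hx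

variable {w : List Bool} {j : ℕ} {b : Bool} {rest : List (ℕ × Bool)}

theorem lt_of_mem_lamSet_tail (h : CanonicalSeq w ((j, b) :: rest)) {x : ℕ}
    (hx : x ∈ lamSet (applyIns w (j, b)) rest) : j < x :=
  lt_of_mem_lamSet h.2.2.2.2 h.2.2.2.1 x hx

theorem le_of_mem_lamSet_cons (h : CanonicalSeq w ((j, b) :: rest)) {x : ℕ}
    (hx : x ∈ lamSet w ((j, b) :: rest)) : j ≤ x := by
  simp only [lamSet] at hx
  split at hx
  · exact (h.lt_of_mem_lamSet_tail hx).le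
  · rcases Finset.mem_insert.mp hx with rfl | hx
    · exact le_rfl
    · exact (h.lt_of_mem_lamSet_tail hx).le

theorem mem_lamSet_cons_iff (h : CanonicalSeq w ((j, b) :: rest)) :
    j ∈ lamSet w ((j, b) :: rest) ↔ ¬(b = false ∧ j = w.length + 1) := by
  have hj : j ∉ lamSet (applyIns w (j, b)) rest := fun hj =>
    (h.lt_of_mem_lamSet_tail hj).false
  simp only [lamSet]
  split_ifs with hend
  · simpa [hend] using hj
  · simp [hend]

theorem lamSet_tail_eq_erase (h : CanonicalSeq w ((j, b) :: rest)) :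
    lamSet (applyIns w (j, b)) rest = (lamSet w ((j, b) :: rest)).erase j := by
  have hj : j ∉ lamSet (applyIns w (j, b)) rest := fun hj =>
    (h.lt_of_mem_lamSet_tail hj).false
  simp only [lamSet]
  split_ifs
  · exact (Finset.erase_eq_of_notMem hj).symm
  · exact (Finset.erase_insert hj).symm

theorem letter_eq (h : CanonicalSeq w ((j, b) :: rest)) (hj : ¬(b = false ∧ j = w.length + 1)) :
    b = if j = w.length + 1 then true else !w.getD (j - 1) false := by
  obtain ⟨-, -, hletter, -⟩ := h
  split_ifs with hend
  · simpa [hend] using hj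
  · have := hletter.resolve_left hend
    cases b <;> simp_all

theorem head_eq_of_lamSet_eq {j' : ℕ} {b' : Bool} {rest' : List (ℕ × Bool)}
    (h : CanonicalSeq w ((j, b) :: rest)) (h' : CanonicalSeq w ((j', b') :: rest'))
    (hΛ : lamSet w ((j, b) :: rest) = lamSet w ((j', b') :: rest')) : (j, b) = (j', b') := by
  have hle := h.2.1
  have hle' := h'.2.1
  have hmem := h.mem_lamSet_cons_iff
  have hmem' := h'.mem_lamSet_cons_iff
  rw [hΛ] at hmem
  have hjj' : j ∈ lamSet w ((j', b') :: rest') → j' ≤ j := h'.le_of_mem_lamSet_cons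
  have hj'j : j' ∈ lamSet w ((j', b') :: rest') → j ≤ j' := hΛ ▸ h.le_of_mem_lamSet_cons
  by_cases hend : b = false ∧ j = w.length + 1 <;>
    by_cases hend' : b' = false ∧ j' = w.length + 1
  · simp [hend.1, hend.2, hend'.1, hend'.2]
  · have : j = j' := by have := hj'j (hmem'.2 hend'); omega
    subst this
    exact absurd (hmem.1 (hmem'.2 hend')) (not_not.2 hend)
  · have : j = j' := by have := hjj' (hmem.2 hend); omega
    subst this
    exact absurd (hmem'.1 (hmem.2 hend)) (not_not.2 hend')
  · have : j = j' := le_antisymm (hj'j (hmem'.2 hend')) (hjj' (hmem.2 hend))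
    subst this
    rw [h.letter_eq hend, h'.letter_eq hend']

end CanonicalSeq

theorem CanonicalSeq.eq_of_lamSet_eq : ∀ {w : List Bool} {s₁ s₂ : List (ℕ × Bool)},
    s₁.length = s₂.length → CanonicalSeq w s₁ → CanonicalSeq w s₂ →
    lamSet w s₁ = lamSet w s₂ → s₁ = s₂
  | _, [], [], _, _, _, _ => rfl
  | w, (j, b) :: r₁, (j', b') :: r₂, hlen, h₁, h₂, hΛ => by
    obtain ⟨rfl, rfl⟩ := Prod.mk.inj (h₁.head_eq_of_lamSet_eq h₂ hΛ)
    have htail : lamSet (applyIns w (j, b)) r₁ = lamSet (applyIns w (j, b)) r₂ := by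
      rw [h₁.lamSet_tail_eq_erase, h₂.lamSet_tail_eq_erase, hΛ]
    rw [eq_of_lamSet_eq (Nat.succ_inj.1 hlen) h₁.2.2.2.2 h₂.2.2.2.2 htail]

theorem location_map_injective_general (w : List Bool) (m : ℕ) (w₁ w₂ : List Bool)
    (s₁ s₂ : List (ℕ × Bool))
    (hs₁len : s₁.length = m) (hs₁can : CanonicalSeq w s₁)
    (hs₁app : applySeq w s₁ = w₁)
    (hs₂len : s₂.length = m) (hs₂can : CanonicalSeq w s₂)
    (hs₂app : applySeq w s₂ = w₂)
    (hΛ : lamSet w s₁ = lamSet w s₂) :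
    w₁ = w₂ := by
  rw [← hs₁app, ← hs₂app, CanonicalSeq.eq_of_lamSet_eq (hs₁len.trans hs₂len.symm) hs₁can hs₂can hΛ]

/-- The location map `Λ` is injective on `I'(w,m)`: two words of `I'(w,m)` whose
canonical insertion sequences have the same location set are equal. -/
theorem location_map_injective (w : List Bool) (m : ℕ) (w₁ w₂ : List Bool)
    (h₁ : w₁ ∈ internalInsertionSet w m) (h₂ : w₂ ∈ internalInsertionSet w m)
    (s₁ s₂ : List (ℕ × Bool))
    (hs₁len : s₁.length = m) (hs₁can : CanonicalSeq w s₁)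
    (hs₁app : applySeq w s₁ = w₁)
    (hs₂len : s₂.length = m) (hs₂can : CanonicalSeq w s₂)
    (hs₂app : applySeq w s₂ = w₂)
    (hΛ : lamSet w s₁ = lamSet w s₂) :
    w₁ = w₂ :=
  location_map_injective_general w m w₁ w₂ s₁ s₂ hs₁len hs₁can hs₁app hs₂len hs₂can hs₂app hΛ
end

section
/- Let n and j be integers with 0 ≤ 3j ≤ n. The number of subsets L of {1, …, n} with |L| = j such that for every i ∈ {1, …, n} the suffix {i, i+1, …, n} contains at least twice as many elements not in L as elements in L (that is, (n − i + 1) − |L ∩ {i,…,n}| ≥ 2·|L ∩ {i,…,n}| for all i) equals C(n,j) − 2·C(n,j−1). -/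
namespace BallotAux

open Finset

open scoped Classical in
noncomputable def T (n j : ℕ) : Finset (Finset ℕ) :=
  (Finset.Icc 1 n).powerset.filter (fun L => L.card = j ∧
    ∀ i ∈ Finset.Icc 1 n, 3 * (L ∩ Finset.Icc i n).card + i ≤ n + 1)

lemma mem_T {n j : ℕ} {L : Finset ℕ} :
    L ∈ T n j ↔ L ⊆ Finset.Icc 1 n ∧ L.card = j ∧
      ∀ i, 1 ≤ i → i ≤ n → 3 * (L ∩ Finset.Icc i n).card + i ≤ n + 1 := by
  simp [T, Finset.mem_filter, Finset.mem_powerset, Finset.mem_Icc, and_assoc]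

lemma add_one_inj : Function.Injective (fun a : ℕ => a + 1) := add_left_injective 1

lemma shift_inter {M : Finset ℕ} {i n : ℕ} (hi : 1 ≤ i) :
    (M.image (· + 1)) ∩ Finset.Icc i (n+1) = (M ∩ Finset.Icc (i-1) n).image (· + 1) := by
  ext x
  simp only [Finset.mem_inter, Finset.mem_image, Finset.mem_Icc]
  constructor
  · rintro ⟨⟨a, ha, rfl⟩, h1, h2⟩
    exact ⟨a, ⟨ha, by omega, by omega⟩, rfl⟩
  · rintro ⟨a, ⟨ha, h1, h2⟩, rfl⟩
    exact ⟨⟨a, ha, rfl⟩, by omega, by omega⟩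

lemma T_bound {n j : ℕ} {M : Finset ℕ} (hM : M ∈ T n j) : (n = 0 ∧ j = 0) ∨ 3 * j ≤ n := by
  rw [mem_T] at hM
  obtain ⟨hsub, hcard, hcond⟩ := hM
  rcases n with _ | m
  · left
    refine ⟨rfl, ?_⟩
    have : M = ∅ := by
      rw [← Finset.subset_empty]
      simpa using hsub
    simp [← hcard, this]
  · right
    have h1 := hcond 1 le_rfl (by omega)
    have : M ∩ Finset.Icc 1 (m+1) = M := Finset.inter_eq_left.mpr hsub
    rw [this, hcard] at h1
    omega

lemma one_notMem_shift {n : ℕ} {M : Finset ℕ} (hM : M ⊆ Finset.Icc 1 n) :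
    1 ∉ M.image (· + 1) := by
  simp only [Finset.mem_image, not_exists]
  rintro a ⟨ha, h⟩
  have := hM ha
  simp [Finset.mem_Icc] at this
  omega

lemma shift_mem_T {n j : ℕ} {M : Finset ℕ} (hM : M ∈ T n j) :
    M.image (· + 1) ∈ T (n+1) j := by
  have hb := T_bound hM
  rw [mem_T] at hM ⊢
  obtain ⟨hsub, hcard, hcond⟩ := hM
  refine ⟨?_, ?_, ?_⟩
  · intro x hx
    simp only [Finset.mem_image] at hx
    obtain ⟨a, ha, rfl⟩ := hx
    have := hsub ha
    simp only [Finset.mem_Icc] at this ⊢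
    omega
  · rw [Finset.card_image_of_injective _ add_one_inj, hcard]
  · intro i hi1 hi2
    rw [shift_inter hi1, Finset.card_image_of_injective _ add_one_inj]
    rcases Nat.lt_or_ge i 2 with h | h
    · -- i = 1
      have hi : i = 1 := by omega
      subst hi
      have : M ∩ Finset.Icc 0 n = M := Finset.inter_eq_left.mpr (fun x hx => by
        have := hsub hx; simp only [Finset.mem_Icc] at this ⊢; omega)
      rw [this, hcard]
      omega
    · have := hcond (i-1) (by omega) (by omega)
      omega

lemma insert_shift_mem_T {n k : ℕ} {M : Finset ℕ} (hM : M ∈ T n k) (h : 3 * (k+1) ≤ n + 1) :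
    insert 1 (M.image (· + 1)) ∈ T (n+1) (k+1) := by
  rw [mem_T] at hM ⊢
  obtain ⟨hsub, hcard, hcond⟩ := hM
  have h1 : (1 : ℕ) ∉ M.image (· + 1) := one_notMem_shift hsub
  have hsub' : insert 1 (M.image (· + 1)) ⊆ Finset.Icc 1 (n+1) := by
    intro x hx
    simp only [Finset.mem_insert, Finset.mem_image] at hx
    simp only [Finset.mem_Icc]
    rcases hx with rfl | ⟨a, ha, rfl⟩
    · omega
    · have := hsub ha; simp only [Finset.mem_Icc] at this; omega
  refine ⟨hsub', ?_, ?_⟩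
  · rw [Finset.card_insert_of_notMem h1, Finset.card_image_of_injective _ add_one_inj, hcard]
  · intro i hi1 hi2
    rcases Nat.lt_or_ge i 2 with hlt | hge
    · have hi : i = 1 := by omega
      subst hi
      have : insert 1 (M.image (· + 1)) ∩ Finset.Icc 1 (n+1) = insert 1 (M.image (· + 1)) :=
        Finset.inter_eq_left.mpr hsub'
      rw [this, Finset.card_insert_of_notMem h1,
        Finset.card_image_of_injective _ add_one_inj, hcard]
      omega
    · have heq : insert 1 (M.image (· + 1)) ∩ Finset.Icc i (n+1)
          = (M.image (· + 1)) ∩ Finset.Icc i (n+1) := by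
        ext x
        simp only [Finset.mem_inter, Finset.mem_insert, Finset.mem_Icc]
        constructor
        · rintro ⟨rfl | hx, h2, h3⟩
          · omega
          · exact ⟨hx, h2, h3⟩
        · rintro ⟨hx, h2, h3⟩
          exact ⟨Or.inr hx, h2, h3⟩
      rw [heq, shift_inter (by omega : 1 ≤ i), Finset.card_image_of_injective _ add_one_inj]
      have := hcond (i-1) (by omega) (by omega)
      omega


lemma unshift {n j : ℕ} {L : Finset ℕ} (hL : L ∈ T (n+1) j) (h1 : 1 ∉ L) :
    (L.image (· - 1)) ∈ T n j ∧ (L.image (· - 1)).image (· + 1) = L := by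
  rw [mem_T] at hL
  obtain ⟨hsub, hcard, hcond⟩ := hL
  have hge : ∀ x ∈ L, 2 ≤ x ∧ x ≤ n + 1 := by
    intro x hx
    have hm := hsub hx
    simp only [Finset.mem_Icc] at hm
    have hne : x ≠ 1 := fun h => h1 (h ▸ hx)
    omega
  have heq : (L.image (· - 1)).image (· + 1) = L := by
    ext x
    simp only [Finset.mem_image]
    constructor
    · rintro ⟨y, ⟨a, ha, rfl⟩, rfl⟩
      have h2 := hge a ha
      have h3 : a - 1 + 1 = a := by omega
      rwa [h3]
    · intro hx
      exact ⟨x - 1, ⟨x, hx, rfl⟩, by have := hge x hx; omega⟩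
  refine ⟨?_, heq⟩
  rw [mem_T]
  refine ⟨?_, ?_, ?_⟩
  · intro x hx
    simp only [Finset.mem_image] at hx
    obtain ⟨a, ha, rfl⟩ := hx
    have := hge a ha
    simp only [Finset.mem_Icc]
    omega
  · rw [Finset.card_image_of_injOn, hcard]
    intro a ha b hb hab
    have := hge a ha
    have := hge b hb
    simp only at hab
    omega
  · intro i hi1 hi2
    have key : L ∩ Finset.Icc (i+1) (n+1)
        = ((L.image (· - 1)) ∩ Finset.Icc i n).image (· + 1) := by
      conv_lhs => rw [← heq]
      rw [shift_inter (by omega : 1 ≤ i + 1)]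
      norm_num
    have hc : (L ∩ Finset.Icc (i+1) (n+1)).card = ((L.image (· - 1)) ∩ Finset.Icc i n).card := by
      rw [key, Finset.card_image_of_injective _ add_one_inj]
    have := hcond (i+1) (by omega) (by omega)
    omega

lemma erase_mem_T {n k : ℕ} {L : Finset ℕ} (hL : L ∈ T (n+1) (k+1)) (h1 : 1 ∈ L) :
    L.erase 1 ∈ T (n+1) k := by
  rw [mem_T] at hL ⊢
  obtain ⟨hsub, hcard, hcond⟩ := hL
  refine ⟨(Finset.erase_subset _ _).trans hsub, ?_, ?_⟩
  · rw [Finset.card_erase_of_mem h1, hcard]; omega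
  · intro i hi1 hi2
    rcases Nat.lt_or_ge i 2 with hlt | hge
    · have hi : i = 1 := by omega
      subst hi
      have e1 : L.erase 1 ∩ Finset.Icc 1 (n+1) = L.erase 1 :=
        Finset.inter_eq_left.mpr ((Finset.erase_subset _ _).trans hsub)
      rw [e1, Finset.card_erase_of_mem h1, hcard]
      have e2 : L ∩ Finset.Icc 1 (n+1) = L := Finset.inter_eq_left.mpr hsub
      have := hcond 1 le_rfl (by omega)
      rw [e2, hcard] at this
      omega
    · have e1 : L.erase 1 ∩ Finset.Icc i (n+1) = L ∩ Finset.Icc i (n+1) := by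
        ext x
        simp only [Finset.mem_inter, Finset.mem_erase, Finset.mem_Icc]
        constructor
        · rintro ⟨⟨_, hx⟩, h2, h3⟩; exact ⟨hx, h2, h3⟩
        · rintro ⟨hx, h2, h3⟩; exact ⟨⟨by omega, hx⟩, h2, h3⟩
      rw [e1]
      exact hcond i hi1 hi2


lemma T_zero_card (n : ℕ) : (T n 0).card = 1 := by
  have h : T n 0 = {∅} := by
    ext L
    rw [mem_T, Finset.mem_singleton]
    constructor
    · rintro ⟨_, hc, _⟩
      exact Finset.card_eq_zero.mp hc
    · rintro rfl
      refine ⟨Finset.empty_subset _, Finset.card_empty, ?_⟩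
      intro i hi1 hi2
      simp
      omega
  rw [h, Finset.card_singleton]

lemma T_card_succ {n k : ℕ} (h : 3 * (k+1) ≤ n + 1) :
    (T (n+1) (k+1)).card = (T n (k+1)).card + (T n k).card := by
  have hdecomp : T (n+1) (k+1) =
      (T n (k+1)).image (fun M => M.image (· + 1)) ∪
      (T n k).image (fun M => insert 1 (M.image (· + 1))) := by
    ext L
    simp only [Finset.mem_union, Finset.mem_image]
    constructor
    · intro hL
      by_cases h1 : 1 ∈ L
      · right
        have hL' := erase_mem_T hL h1
        have h1' : 1 ∉ L.erase 1 := Finset.notMem_erase 1 L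
        obtain ⟨hM, hMeq⟩ := unshift hL' h1'
        exact ⟨_, hM, by rw [hMeq, Finset.insert_erase h1]⟩
      · left
        obtain ⟨hM, hMeq⟩ := unshift hL h1
        exact ⟨_, hM, hMeq⟩
    · rintro (⟨M, hM, rfl⟩ | ⟨M, hM, rfl⟩)
      · exact shift_mem_T hM
      · exact insert_shift_mem_T hM h
  rw [hdecomp, Finset.card_union_of_disjoint, Finset.card_image_of_injective _
      (Finset.image_injective add_one_inj), Finset.card_image_of_injOn]
  · intro M hM M' hM' hee
    simp only at hee
    have hs : M ⊆ Finset.Icc 1 n := (mem_T.mp hM).1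
    have hs' : M' ⊆ Finset.Icc 1 n := (mem_T.mp hM').1
    have e1 : M.image (· + 1) = M'.image (· + 1) := by
      have := congrArg (Finset.erase · 1) hee
      simpa [Finset.erase_insert (one_notMem_shift hs),
        Finset.erase_insert (one_notMem_shift hs')] using this
    exact Finset.image_injective add_one_inj e1
  · rw [Finset.disjoint_left]
    rintro L hL1 hL2
    simp only [Finset.mem_image] at hL1 hL2
    obtain ⟨M, hM, rfl⟩ := hL1
    obtain ⟨M', hM', heqq⟩ := hL2
    have : (1 : ℕ) ∈ M.image (· + 1) := by
      rw [← heqq]; exact Finset.mem_insert_self 1 _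
    exact one_notMem_shift (mem_T.mp hM).1 this

lemma T_count : ∀ n j : ℕ, 3 * j ≤ n + 1 →
    ((T n j).card : ℤ) = (n.choose j : ℤ) -
      2 * (if j = 0 then 0 else (n.choose (j - 1) : ℤ)) := by
  intro n
  induction n with
  | zero =>
    intro j hj
    have hj0 : j = 0 := by omega
    subst hj0
    simp [T_zero_card]
  | succ n ih =>
    intro j hj
    rcases j with _ | k
    · simp [T_zero_card]
    · by_cases hcase : 3 * (k + 1) ≤ n + 1
      · rw [T_card_succ hcase]
        have h1 := ih (k+1) (by omega)
        have h2 := ih k (by omega)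
        simp only [Nat.add_sub_cancel] at h1 ⊢
        rcases k with _ | m
        · simp only [if_neg (Nat.one_ne_zero)] at h1 ⊢
          simp only [if_pos rfl] at h2
          push_cast
          rw [h1, h2]
          simp [Nat.choose_one_right, Nat.choose_zero_right]
          ring
        · simp only [Nat.add_sub_cancel, if_neg (Nat.succ_ne_zero _)] at h1 h2 ⊢
          have p1 : (n+1).choose (m+1+1) = n.choose (m+1) + n.choose (m+1+1) :=
            Nat.choose_succ_succ n (m+1)
          have p2 : (n+1).choose (m+1) = n.choose m + n.choose (m+1) :=
            Nat.choose_succ_succ n m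
          push_cast [p1, p2] at h1 h2 ⊢
          rw [h1, h2]
          ring
      · -- boundary: 3*(k+1) = n + 2
        have hn : n + 2 = 3 * (k + 1) := by omega
        have hempty : T (n+1) (k+1) = ∅ := by
          rw [Finset.eq_empty_iff_forall_notMem]
          intro L hL
          rcases T_bound hL with ⟨h0, _⟩ | hle
          · omega
          · omega
        have hch : (n+1).choose (k+1) * (k+1) = (n+1).choose k * (2 * (k+1)) := by
          have := Nat.choose_succ_right_eq (n+1) k
          rw [this]
          congr 1
          omega
        have hch2 : (n+1).choose (k+1) = 2 * ((n+1).choose k) := by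
          have hk : 0 < k + 1 := Nat.succ_pos k
          have : (n+1).choose (k+1) * (k+1) = (2 * ((n+1).choose k)) * (k+1) := by
            rw [hch]; ring
          exact Nat.eq_of_mul_eq_mul_right hk this
        rw [hempty]
        simp only [Finset.card_empty, Nat.cast_zero, if_neg (Nat.succ_ne_zero k),
          Nat.add_sub_cancel, hch2]
        push_cast
        ring

end BallotAux

open scoped Classical in
/-- Ballot-type count: the number of `j`-element subsets `L` of `{1,…,n}` such
that every suffix `{i,…,n}` contains at least twice as many elements not in `L`
as elements in `L` equals `C(n,j) − 2·C(n,j−1)` (with `C(n,-1) = 0`). -/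
theorem ballot_count (n j : ℕ) (h : 3 * j ≤ n) :
    (((Finset.Icc 1 n).powerset.filter (fun L : Finset ℕ =>
        L.card = j ∧ ∀ i ∈ Finset.Icc 1 n,
          2 * (L ∩ Finset.Icc i n).card ≤
            (n - i + 1) - (L ∩ Finset.Icc i n).card)).card : ℤ) =
      (Nat.choose n j : ℤ) -
        2 * (if j = 0 then 0 else (Nat.choose n (j - 1) : ℤ)) := by
  have hset : ((Finset.Icc 1 n).powerset.filter (fun L : Finset ℕ =>
        L.card = j ∧ ∀ i ∈ Finset.Icc 1 n,
          2 * (L ∩ Finset.Icc i n).card ≤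
            (n - i + 1) - (L ∩ Finset.Icc i n).card)) = BallotAux.T n j := by
    have key : ∀ (L : Finset ℕ) (i : ℕ), 1 ≤ i → i ≤ n →
        (2 * (L ∩ Finset.Icc i n).card ≤ (n - i + 1) - (L ∩ Finset.Icc i n).card
          ↔ 3 * (L ∩ Finset.Icc i n).card + i ≤ n + 1) := by
      intro L i hi1 hi2
      have hcb : (L ∩ Finset.Icc i n).card ≤ n + 1 - i := by
        calc (L ∩ Finset.Icc i n).card ≤ (Finset.Icc i n).card :=
              Finset.card_le_card Finset.inter_subset_right
          _ = n + 1 - i := Nat.card_Icc i n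
      omega
    ext L
    simp only [Finset.mem_filter, Finset.mem_powerset, BallotAux.mem_T]

    constructor
    · rintro ⟨hsub, hc, hcond⟩
      exact ⟨hsub, hc, fun i hi1 hi2 =>
        (key L i hi1 hi2).mp (hcond i (Finset.mem_Icc.mpr ⟨hi1, hi2⟩))⟩
    · rintro ⟨hsub, hc, hcond⟩
      refine ⟨hsub, hc, fun i hi => ?_⟩
      rw [Finset.mem_Icc] at hi
      exact (key L i hi.1 hi.2).mpr (hcond i hi.1 hi.2)
  rw [hset]
  exact BallotAux.T_count n j (by omega)
end

section
/- For all integers n ≥ 0 and m ≥ 0, the following identity holds: n·C(n,<m) = 2·Σ_{k=0}^{m−1} k·C(n,k) + m·C(n,m). Equivalently, Σ_{k=0}^{m−1} k·C(n,k) = (n/2)·C(n,<m) − (m/2)·C(n,m). -/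
lemma key (n m : ℕ) :
    ((m : ℤ) + 1) * Nat.choose n (m+1) = ((n : ℤ) - m) * Nat.choose n m := by
  rcases le_or_gt m n with h | h
  · have h2 := Nat.choose_succ_right_eq n m
    zify [h] at h2
    linarith
  · rw [Nat.choose_eq_zero_of_lt h, Nat.choose_eq_zero_of_lt (by omega)]
    simp

/-- `n·C(n,<m) = 2·Σ_{k<m} k·C(n,k) + m·C(n,m)`, equivalently
`Σ_{k<m} k·C(n,k) = (n/2)·C(n,<m) − (m/2)·C(n,m)`. -/
theorem sum_k_choose (n m : ℕ) :
    (n : ℤ) * ∑ k ∈ Finset.range m, (Nat.choose n k : ℤ) =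
      2 * ∑ k ∈ Finset.range m, (k : ℤ) * Nat.choose n k +
        (m : ℤ) * Nat.choose n m := by
  induction m with
  | zero => simp
  | succ m ih =>
    rw [Finset.sum_range_succ, Finset.sum_range_succ]
    have := key n m
    push_cast
    linarith
end

section
/- For all integers n ≥ 0 and m ≥ 0, the following identity holds: n·(n−1)·C(n,<m) = 4·Σ_{k=0}^{m−1} k·(k−1)·C(n,k) + m·(2m + n − 3)·C(n,m). Equivalently, Σ_{k=0}^{m−1} k(k−1)·C(n,k) = (n(n−1)/4)·C(n,<m) − (m(2m+n−3)/4)·C(n,m). -/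
lemma key_choose (n k : ℕ) :
    ((k : ℤ) + 1) * Nat.choose n (k + 1) = ((n : ℤ) - k) * Nat.choose n k := by
  rcases le_or_gt k n with h | h
  · have := Nat.choose_succ_right_eq n k
    zify [h] at this
    linarith [this]
  · rw [Nat.choose_eq_zero_of_lt h, Nat.choose_eq_zero_of_lt (by omega)]
    push_cast; ring

/-- `n(n−1)·C(n,<m) = 4·Σ_{k<m} k(k−1)·C(n,k) + m(2m+n−3)·C(n,m)`, equivalently
`Σ_{k<m} k(k−1)·C(n,k) = (n(n−1)/4)·C(n,<m) − (m(2m+n−3)/4)·C(n,m)`. -/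
theorem sum_k_sq_choose (n m : ℕ) :
    (n : ℤ) * ((n : ℤ) - 1) * ∑ k ∈ Finset.range m, (Nat.choose n k : ℤ) =
      4 * ∑ k ∈ Finset.range m, (k : ℤ) * ((k : ℤ) - 1) * Nat.choose n k +
        (m : ℤ) * (2 * (m : ℤ) + (n : ℤ) - 3) * Nat.choose n m := by
  induction m with
  | zero => simp
  | succ m ih =>
    rw [Finset.sum_range_succ, Finset.sum_range_succ]
    have hk := key_choose n m
    push_cast
    nlinarith [hk, ih]
end

section
/- Define φ(x,y) = x·H(y/x) + H((1−x−y)/3) − 1 on the region D = {(x,y) ∈ ℝ² : 0 < x, 0 ≤ y ≤ x, x + y ≤ 1}, where H(p) = −p·log₂ p − (1−p)·log₂(1−p) is the binary entropy function (with H(0) = H(1) = 0). Then φ(x,y) ≤ 0 for all (x,y) ∈ D, with equality if and only if x = (√5 − 1)/4 and y = (√5 − 2)/2. -/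
/-!
Gibbs' inequality `H(p) ≤ -p log₂ t - (1-p) log₂ (1-t)`, with equality iff `p = t`, applied to
the two entropy terms with `t = φ⁻²` and `t = φ⁻²/2` (`φ` the golden ratio), bounds `phi x y` by
an affine function of `(x, y)`. Since `1 - φ⁻² = φ⁻¹` and `1 - φ⁻²/2 = φ/2`, every logarithm in
this bound is an integer combination of `1` and `log₂ φ`, and the bound vanishes identically.
Equality forces `y/x = φ⁻²` and `(1-x-y)/3 = φ⁻²/2`, which pins down the point.
-/

/-- The binary entropy function `H(p) = −p·log₂ p − (1−p)·log₂(1−p)`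
(with `H(0) = H(1) = 0`, which holds by the convention `log 0 = 0`). -/
noncomputable def binEnt (p : ℝ) : ℝ :=
  -(p * Real.logb 2 p) - (1 - p) * Real.logb 2 (1 - p)

/-- `φ(x,y) = x·H(y/x) + H((1−x−y)/3) − 1`. -/
noncomputable def phi (x y : ℝ) : ℝ :=
  x * binEnt (y / x) + binEnt ((1 - x - y) / 3) - 1

open Real InformationTheory goldenRatio

noncomputable def binCrossEnt (p t : ℝ) : ℝ :=
  -(p * logb 2 t) - (1 - p) * logb 2 (1 - t)

lemma mul_log_div_eq (a : ℝ) {b : ℝ} (hb : b ≠ 0) :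
    a * log (a / b) = a * log a - a * log b := by
  rcases eq_or_ne a 0 with rfl | ha
  · simp
  · rw [log_div ha hb, mul_sub]

lemma mul_klFun_div (a : ℝ) {b : ℝ} (hb : b ≠ 0) :
    b * klFun (a / b) = a * log a - a * log b + b - a := by
  rw [klFun, ← mul_log_div_eq a hb]
  field_simp

lemma binCrossEnt_sub_binEnt (p : ℝ) {t : ℝ} (ht0 : t ≠ 0) (ht1 : 1 - t ≠ 0) :
    binCrossEnt p t - binEnt p =
      (t * klFun (p / t) + (1 - t) * klFun ((1 - p) / (1 - t))) / log 2 := by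
  rw [mul_klFun_div p ht0, mul_klFun_div (1 - p) ht1, binCrossEnt, binEnt, logb, logb, logb, logb]
  ring

section Gibbs

variable {p t : ℝ} (hp0 : 0 ≤ p) (hp1 : p ≤ 1) (ht0 : 0 < t) (ht1 : t < 1)
include hp0 hp1 ht0 ht1

lemma binEnt_le_binCrossEnt : binEnt p ≤ binCrossEnt p t := by
  have h1t := sub_pos.2 ht1
  rw [← sub_nonneg, binCrossEnt_sub_binEnt p ht0.ne' h1t.ne']
  have := klFun_nonneg (div_nonneg hp0 ht0.le)
  have := klFun_nonneg (div_nonneg (sub_nonneg.2 hp1) h1t.le)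
  have := log_pos one_lt_two
  positivity

lemma binEnt_eq_binCrossEnt_iff : binEnt p = binCrossEnt p t ↔ p = t := by
  refine ⟨fun h ↦ ?_, fun h ↦ by rw [h, binCrossEnt, binEnt]⟩
  have hgap := binCrossEnt_sub_binEnt p ht0.ne' (sub_pos.2 ht1).ne'
  rw [← h, sub_self, eq_comm, div_eq_zero_iff, or_iff_left (log_pos one_lt_two).ne'] at hgap
  have k₁ := mul_nonneg ht0.le (klFun_nonneg (div_nonneg hp0 ht0.le))
  have k₂ := mul_nonneg (sub_pos.2 ht1).le
    (klFun_nonneg (div_nonneg (sub_nonneg.2 hp1) (sub_pos.2 ht1).le))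
  have hkl : klFun (p / t) = 0 := by
    have : t * klFun (p / t) = 0 := by linarith
    simpa [ht0.ne'] using this
  rwa [klFun_eq_zero_iff (div_nonneg hp0 ht0.le), div_eq_one_iff_eq ht0.ne'] at hkl

end Gibbs

lemma inv_goldenRatio_sq_eq : φ⁻¹ ^ 2 = (3 - √5) / 2 := by
  rw [inv_goldenRatio, goldenConj]
  nlinarith [sq_sqrt (show (0:ℝ) ≤ 5 by norm_num)]

lemma one_sub_inv_goldenRatio_sq : 1 - φ⁻¹ ^ 2 = φ⁻¹ := by
  rw [inv_goldenRatio_sq_eq, inv_goldenRatio, goldenConj]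
  ring

lemma one_sub_inv_goldenRatio_sq_div_two : 1 - φ⁻¹ ^ 2 / 2 = φ / 2 := by
  rw [inv_goldenRatio_sq_eq, goldenRatio]
  ring

lemma binCrossEnt_inv_goldenRatio_sq (p : ℝ) :
    binCrossEnt p (φ⁻¹ ^ 2) = (1 + p) * logb 2 φ := by
  rw [binCrossEnt, one_sub_inv_goldenRatio_sq, logb_pow, logb_inv]
  ring

lemma binCrossEnt_inv_goldenRatio_sq_div_two (q : ℝ) :
    binCrossEnt q (φ⁻¹ ^ 2 / 2) = 1 + (3 * q - 1) * logb 2 φ := by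
  have h2 : (2 : ℝ) ≠ 0 := two_ne_zero
  rw [binCrossEnt, one_sub_inv_goldenRatio_sq_div_two,
    logb_div (pow_ne_zero 2 (inv_ne_zero goldenRatio_ne_zero)) h2, logb_div goldenRatio_ne_zero h2,
    logb_self_eq_one one_lt_two, logb_pow, logb_inv]
  ring

lemma div_eq_inv_goldenRatio_sq_and_iff {x y : ℝ} (hx : x ≠ 0) :
    y / x = φ⁻¹ ^ 2 ∧ (1 - x - y) / 3 = φ⁻¹ ^ 2 / 2 ↔
      x = (√5 - 1) / 4 ∧ y = (√5 - 2) / 2 := by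
  have h5 : √5 ^ 2 = 5 := sq_sqrt (by norm_num)
  have h53 : √5 < 3 := by nlinarith [sqrt_nonneg 5]
  rw [inv_goldenRatio_sq_eq, div_eq_iff hx]
  constructor
  · rintro ⟨hy, hq⟩
    have hx' : x = (√5 - 1) / 4 := by
      have : (x - (√5 - 1) / 4) * (5 - √5) = 0 := by
        linear_combination (-6) * hq - 2 * hy + h5 / 4
      linarith [(mul_eq_zero.1 this).resolve_right (by linarith)]
    exact ⟨hx', by rw [hy, hx']; linear_combination (-1 / 8 : ℝ) * h5⟩
  · rintro ⟨rfl, rfl⟩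
    exact ⟨by linear_combination (1 / 8 : ℝ) * h5, by ring⟩

/-- On the region `0 < x`, `0 ≤ y ≤ x`, `x + y ≤ 1`, the function `φ` is
nonpositive, with equality exactly at `x = (√5−1)/4`, `y = (√5−2)/2`. -/
theorem phi_nonpos (x y : ℝ) (hx : 0 < x) (hy : 0 ≤ y) (hyx : y ≤ x)
    (hxy : x + y ≤ 1) :
    phi x y ≤ 0 ∧
      (phi x y = 0 ↔ x = (Real.sqrt 5 - 1) / 4 ∧ y = (Real.sqrt 5 - 2) / 2) := by
  set t := φ⁻¹ ^ 2
  have ht0 : 0 < t := by positivity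
  have ht1 : t < 1 :=
    pow_lt_one₀ (by positivity) (inv_lt_one_of_one_lt₀ one_lt_goldenRatio) two_ne_zero
  have hp0 : 0 ≤ y / x := div_nonneg hy hx.le
  have hp1 : y / x ≤ 1 := (div_le_one hx).2 hyx
  have hq0 : 0 ≤ (1 - x - y) / 3 := by linarith
  have hq1 : (1 - x - y) / 3 ≤ 1 := by linarith
  have hbound : x * binCrossEnt (y / x) t + binCrossEnt ((1 - x - y) / 3) (t / 2) = 1 := by
    rw [binCrossEnt_inv_goldenRatio_sq, binCrossEnt_inv_goldenRatio_sq_div_two]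
    field_simp
    ring
  have h₁ := mul_le_mul_of_nonneg_left (binEnt_le_binCrossEnt hp0 hp1 ht0 ht1) hx.le
  have h₂ := binEnt_le_binCrossEnt hq0 hq1 (half_pos ht0) (by linarith)
  have hphi : phi x y = 0 ↔ x * binEnt (y / x) + binEnt ((1 - x - y) / 3) =
      x * binCrossEnt (y / x) t + binCrossEnt ((1 - x - y) / 3) (t / 2) := by
    rw [phi, hbound, sub_eq_zero]
  refine ⟨by rw [phi]; linarith, ?_⟩
  rw [hphi, add_eq_add_iff_eq_and_eq h₁ h₂, mul_right_inj' hx.ne',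
    binEnt_eq_binCrossEnt_iff hp0 hp1 ht0 ht1,
    binEnt_eq_binCrossEnt_iff hq0 hq1 (half_pos ht0) (by linarith),
    div_eq_inv_goldenRatio_sq_and_iff hx.ne']
end
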